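/- Let P_s be a sign pattern on n nodes and let Z ⊆ V be a negative signed zero forcing set of P_s. Then for every A ∈ Q_s(P_s) and every real λ < 0, the dimension of the left eigenspace {ν ∈ ℝ^n : ν^T A = λ ν^T} is at most |Z|. In particular, the maximum geometric multiplicity of a negative eigenvalue over all A ∈ Q_s(P_s) is at most the negative signed zero forcing number of P_s (the minimum cardinality of a negative signed zero forcing set). -/

import Mathlib

/-- An entry of a sign pattern: `+`, `-`, `0`, or `?` (unrestricted). -/
inductive SignPatEntry : Type
  | pos | neg | zero | unk
deriving DecidableEq

namespace SignPatEntry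

/-- Sign inversion: `inv(+) = -`, `inv(-) = +`. -/
def inv : SignPatEntry → SignPatEntry
  | pos => neg
  | neg => pos
  | zero => zero
  | unk => unk

/-- Product of signs (used as `s · P(u,v)`). -/
def mul : SignPatEntry → SignPatEntry → SignPatEntry
  | pos, y => y
  | neg, y => y.inv
  | zero, _ => zero
  | unk, _ => unk

end SignPatEntry

/-- A real number matches a sign-pattern entry. -/
def matchesSign : SignPatEntry → ℝ → Prop
  | .pos, a => 0 < a
  | .neg, a => a < 0
  | .zero, a => a = 0
  | .unk, _ => True

/-- The qualitative class of a sign pattern: real matrices whose entries have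
the prescribed signs. -/
def QClass {n : ℕ} (P : Fin n → Fin n → SignPatEntry)
    (A : Matrix (Fin n) (Fin n) ℝ) : Prop :=
  ∀ i j : Fin n, matchesSign (P i j) (A i j)

/-- A configuration of the signing-and-coloring game: a set of black nodes and a
partial marking of nodes with signs. -/
structure Config (n : ℕ) where
  black : Finset (Fin n)
  mark : Fin n → Option SignPatEntry

/-- The set of white out-neighbors of `v` (out-neighbors of `v` are the `u` with
`P u v ≠ 0`). -/
def Wset {n : ℕ} (P : Fin n → Fin n → SignPatEntry) (c : Config n) (v : Fin n) :
    Finset (Fin n) :=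
  Finset.univ.filter (fun u => u ∉ c.black ∧ P u v ≠ SignPatEntry.zero)

/-- One step of the signing and coloring rule, played on the pattern `P`. -/
inductive Step {n : ℕ} (P : Fin n → Fin n → SignPatEntry) : Config n → Config n → Prop
  /-- (1) a pivot node `v` with a single white out-neighbor `u` forces `u` black. -/
  | force1 (c : Config n) (v u : Fin n)
      (hv : v ∈ c.black ∨ P v v ≠ SignPatEntry.unk)
      (hW : Wset P c v = {u}) :
      Step P c ⟨insert u c.black, c.mark⟩
  /-- (2) if all white out-neighbors of a pivot `v` are marked consistently
  (all with `m(u) = P(u,v)` or all with `m(u) = -P(u,v)`), they all become black. -/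
  | force2 (c : Config n) (v : Fin n)
      (hv : v ∈ c.black ∨ P v v ≠ SignPatEntry.unk)
      (hall : (∀ u ∈ Wset P c v, c.mark u = some (P u v)) ∨
              (∀ u ∈ Wset P c v, c.mark u = some (P u v).inv)) :
      Step P c ⟨c.black ∪ Wset P c v, c.mark⟩
  /-- (3) if exactly one white out-neighbor `w` of a pivot `v` is unmarked, at least one
  is marked, and every marked one satisfies `m(u) = s · P(u,v)`, then `w` gets
  marked with `-s · P(w,v)`. -/
  | force3 (c : Config n) (v w : Fin n) (s : SignPatEntry)
      (hv : v ∈ c.black ∨ P v v ≠ SignPatEntry.unk)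
      (hs : s = SignPatEntry.pos ∨ s = SignPatEntry.neg)
      (hw : w ∈ Wset P c v) (hwnone : c.mark w = none)
      (hmarked : ∀ u ∈ Wset P c v, u ≠ w → c.mark u = some (s.mul (P u v)))
      (hex : ∃ u ∈ Wset P c v, u ≠ w) :
      Step P c ⟨c.black, Function.update c.mark w (some (s.inv.mul (P w v)))⟩
  /-- (4) if no white node is marked, an arbitrary white node may be marked `+`. -/
  | force4 (c : Config n) (u : Fin n)
      (hnomark : ∀ x : Fin n, x ∉ c.black → c.mark x = none)
      (hu : u ∉ c.black) :
      Step P c ⟨c.black, Function.update c.mark u (some SignPatEntry.pos)⟩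

/-- The initial configuration: black set `Z`, no marks. -/
def initConfig {n : ℕ} (Z : Finset (Fin n)) : Config n := ⟨Z, fun _ => none⟩

/-- `Z` is a signed zero forcing set of the pattern `P`. -/
def SignedZFS {n : ℕ} (P : Fin n → Fin n → SignPatEntry) (Z : Finset (Fin n)) : Prop :=
  ∃ c : Config n, Relation.ReflTransGen (Step P) (initConfig Z) c ∧ c.black = Finset.univ

/-- The negative looped pattern `P⁻`: off-diagonal as `P`; diagonal `-` if
`P i i ∈ {0,-}`, and `?` if `P i i ∈ {+,?}`. -/
def negLooped {n : ℕ} (P : Fin n → Fin n → SignPatEntry) :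
    Fin n → Fin n → SignPatEntry := fun i j =>
  if i = j then
    (match P i i with
      | SignPatEntry.zero => SignPatEntry.neg
      | SignPatEntry.neg => SignPatEntry.neg
      | _ => SignPatEntry.unk)
  else P i j

/-- The positive looped pattern `P⁺`: off-diagonal as `P`; diagonal `+` if
`P i i ∈ {0,+}`, and `?` if `P i i ∈ {-,?}`. -/
def posLooped {n : ℕ} (P : Fin n → Fin n → SignPatEntry) :
    Fin n → Fin n → SignPatEntry := fun i j =>
  if i = j then
    (match P i i with
      | SignPatEntry.zero => SignPatEntry.pos
      | SignPatEntry.pos => SignPatEntry.pos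
      | _ => SignPatEntry.unk)
  else P i j

/-- The sign of a real number, as a sign-pattern entry. -/
noncomputable def sgnR (x : ℝ) : SignPatEntry :=
  if 0 < x then SignPatEntry.pos else if x < 0 then SignPatEntry.neg else SignPatEntry.zero

/-- The left eigenspace `{ν | νᵀ A = λ νᵀ}` as a submodule of `ℝⁿ`. -/
def leftEigenspace {n : ℕ} (A : Matrix (Fin n) (Fin n) ℝ) (lam : ℝ) :
    Submodule ℝ (Fin n → ℝ) where
  carrier := {ν | Matrix.vecMul ν A = lam • ν}
  zero_mem' := by simp [Matrix.zero_vecMul]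
  add_mem' := by
    intro a b ha hb
    simp only [Set.mem_setOf_eq] at *
    rw [Matrix.add_vecMul, ha, hb, smul_add]
  smul_mem' := by
    intro c a ha
    simp only [Set.mem_setOf_eq] at *
    rw [Matrix.smul_vecMul, ha, smul_comm]

/-! If `νᵀ A = λ νᵀ` with `λ < 0`, then `νᵀ B = 0` for `B = A - λ I`, and `B` lies in the
qualitative class of the positive looped pattern: shifting by `-λ > 0` makes every diagonal
entry that was `0` or `+` strictly positive. Along any play of the signing-and-coloring game
on that pattern, black nodes carry `ν = 0` and, up to one global sign, every mark is the sign
of `ν` at that node. Each rule preserves this because the column equation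
`∑ u, ν u * B u v = 0` only involves the white out-neighbours of the pivot `v`, and the sign
of each `B u v` there is prescribed. A play that turns everything black thus forces `ν = 0`,
so `ν ↦ ν|_Z` is injective on the eigenspace. -/

open SignPatEntry Matrix

noncomputable def SignPatEntry.toReal : SignPatEntry → ℝ
  | pos => 1
  | neg => -1
  | zero => 0
  | unk => 0

namespace SignPatEntry

@[simp]
lemma toReal_inv (a : SignPatEntry) : a.inv.toReal = -a.toReal := by
  cases a <;> simp [toReal, inv]

@[simp]
lemma toReal_mul (a b : SignPatEntry) : (a.mul b).toReal = a.toReal * b.toReal := by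
  cases a <;> cases b <;> simp [toReal, mul, inv]

lemma toReal_mul_self_of_pos {a : SignPatEntry} {x : ℝ} (h : 0 < a.toReal * x) :
    a.toReal * a.toReal = 1 := by
  cases a <;> simp_all [toReal]

lemma toReal_mul_pos_of_matchesSign {a : SignPatEntry} {x : ℝ} (ha0 : a ≠ zero)
    (hau : a ≠ unk) (h : matchesSign a x) : 0 < a.toReal * x := by
  cases a <;> simp_all [toReal, matchesSign]

end SignPatEntry

lemma posLooped_ne_unk {n : ℕ} {P : Fin n → Fin n → SignPatEntry}
    (hP : ∀ i j : Fin n, i ≠ j → P i j ≠ unk) (i j : Fin n) (hij : i ≠ j) :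
    posLooped P i j ≠ unk := by
  simpa [posLooped, hij] using hP i j hij

lemma QClass.posLooped_sub_smul_one {n : ℕ} {P : Fin n → Fin n → SignPatEntry}
    {A : Matrix (Fin n) (Fin n) ℝ} (hA : QClass P A) {lam : ℝ} (hlam : lam < 0) :
    QClass (posLooped P) (A - lam • 1) := by
  intro i j
  by_cases hij : i = j
  · subst hij
    have hAii := hA i i
    cases h : P i i <;> simp_all [posLooped, matchesSign]
    linarith
  · simpa [posLooped, hij, Matrix.one_apply_ne hij] using hA i j

lemma vecMul_sub_smul_one_eq_zero {n : ℕ} {A : Matrix (Fin n) (Fin n) ℝ} {lam : ℝ}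
    {ν : Fin n → ℝ} (hν : ν ∈ leftEigenspace A lam) : ν ᵥ* (A - lam • 1) = 0 := by
  have hν : ν ᵥ* A = lam • ν := hν
  rw [Matrix.vecMul_sub, Matrix.vecMul_smul, Matrix.vecMul_one, hν, sub_self]

lemma finrank_le_card_of_eq_zero_of_forall_mem_eq_zero {K ι : Type*} [Field K] [Fintype ι]
    (S : Submodule K (ι → K)) (Z : Finset ι)
    (h : ∀ ν ∈ S, (∀ z ∈ Z, ν z = 0) → ν = 0) : Module.finrank K S ≤ Z.card := by
  let restrict : S →ₗ[K] (Z → K) :=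
    (LinearMap.funLeft K K ((↑) : Z → ι)).comp S.subtype
  have hinj : Function.Injective restrict := by
    rw [← LinearMap.ker_eq_bot, LinearMap.ker_eq_bot']
    rintro ⟨ν, hνS⟩ hν
    exact Subtype.ext (h ν hνS fun z hz => congrFun hν ⟨z, hz⟩)
  simpa using LinearMap.finrank_le_finrank_of_injective hinj

section Game

variable {n : ℕ} {Q : Fin n → Fin n → SignPatEntry} {B : Matrix (Fin n) (Fin n) ℝ}
  {ν : Fin n → ℝ} {c : Config n} {v : Fin n}

def IsPivot (Q : Fin n → Fin n → SignPatEntry) (c : Config n) (v : Fin n) : Prop :=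
  v ∈ c.black ∨ Q v v ≠ unk

lemma sum_wset_eq_zero (hB : QClass Q B) (hν : ν ᵥ* B = 0)
    (hblack : ∀ u ∈ c.black, ν u = 0) (v : Fin n) :
    ∑ u ∈ Wset Q c v, ν u * B u v = 0 := by
  rw [Finset.sum_subset (Finset.subset_univ _)]
  · simpa [Matrix.vecMul, dotProduct] using congrFun hν v
  · intro u _ hu
    simp only [Wset, Finset.mem_filter, Finset.mem_univ, true_and, not_and, not_not] at hu
    by_cases hub : u ∈ c.black
    · simp [hblack u hub]
    · have hBuv := hB u v
      rw [hu hub] at hBuv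
      simp [show B u v = 0 from hBuv]

lemma toReal_mul_pos_of_mem_wset (hQ : ∀ i j : Fin n, i ≠ j → Q i j ≠ unk) (hB : QClass Q B)
    (hv : IsPivot Q c v) {u : Fin n} (hu : u ∈ Wset Q c v) : 0 < (Q u v).toReal * B u v := by
  simp only [Wset, Finset.mem_filter, Finset.mem_univ, true_and] at hu
  refine toReal_mul_pos_of_matchesSign hu.2 ?_ (hB u v)
  by_cases huv : u = v
  · subst huv
    exact hv.resolve_left hu.1
  · exact hQ u v huv

lemma eq_zero_of_mem_wset_of_nonneg (hQ : ∀ i j : Fin n, i ≠ j → Q i j ≠ unk)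
    (hB : QClass Q B) (hν : ν ᵥ* B = 0) (hblack : ∀ u ∈ c.black, ν u = 0)
    (hv : IsPivot Q c v) {τ : ℝ} (hτ : τ ≠ 0)
    (hterm : ∀ u ∈ Wset Q c v, 0 ≤ τ * (ν u * B u v)) :
    ∀ u ∈ Wset Q c v, ν u = 0 := by
  have hsum : ∑ u ∈ Wset Q c v, τ * (ν u * B u v) = 0 := by
    rw [← Finset.mul_sum, sum_wset_eq_zero hB hν hblack v, mul_zero]
  intro u hu
  have hBuv : B u v ≠ 0 := right_ne_zero_of_mul (toReal_mul_pos_of_mem_wset hQ hB hv hu).ne'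
  simpa [hτ, hBuv] using (Finset.sum_eq_zero_iff_of_nonneg hterm).1 hsum u hu

def MarksAgree (ν : Fin n → ℝ) (c : Config n) (σ : ℝ) : Prop :=
  ∀ u t, c.mark u = some t → 0 ≤ σ * t.toReal * ν u

def GameInvariant (ν : Fin n → ℝ) (c : Config n) : Prop :=
  (∀ u ∈ c.black, ν u = 0) ∧ ∃ σ : ℝ, σ ≠ 0 ∧ MarksAgree ν c σ

lemma MarksAgree.nonneg_mul_of_pos {σ : ℝ} (h : MarksAgree ν c σ) {u : Fin n} {t : SignPatEntry}
    (hu : c.mark u = some t) {q : SignPatEntry} {x : ℝ} (hq : 0 < q.toReal * x) :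
    0 ≤ σ * (t.toReal * q.toReal) * (ν u * x) := by
  have := mul_nonneg (h u t hu) hq.le
  linarith

lemma gameInvariant_initConfig {Z : Finset (Fin n)} (hZ : ∀ z ∈ Z, ν z = 0) :
    GameInvariant ν (initConfig Z) :=
  ⟨hZ, 1, one_ne_zero, by simp [MarksAgree, initConfig]⟩

lemma GameInvariant.force4 (h : GameInvariant ν c) {u : Fin n}
    (hnomark : ∀ x : Fin n, x ∉ c.black → c.mark x = none) :
    GameInvariant ν ⟨c.black, Function.update c.mark u (some pos)⟩ := by
  obtain ⟨hblack, -⟩ := h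
  refine ⟨hblack, if 0 ≤ ν u then 1 else -1, by split_ifs <;> norm_num, fun x t hx => ?_⟩
  dsimp only at hx
  by_cases hxu : x = u
  · subst hxu
    simp only [Function.update_self, Option.some.injEq] at hx
    subst hx
    simp only [toReal, mul_one]
    split_ifs with hνx <;> linarith
  · rw [Function.update_of_ne hxu] at hx
    have hxb : x ∈ c.black := by
      by_contra hxb
      simp [hnomark x hxb] at hx
    simp [hblack x hxb]

variable (hQ : ∀ i j : Fin n, i ≠ j → Q i j ≠ unk) (hB : QClass Q B) (hν : ν ᵥ* B = 0)
include hQ hB hν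

lemma GameInvariant.force1 (h : GameInvariant ν c) (hv : IsPivot Q c v) {u : Fin n}
    (hW : Wset Q c v = {u}) : GameInvariant ν ⟨insert u c.black, c.mark⟩ := by
  obtain ⟨hblack, hmarks⟩ := h
  have hsum := sum_wset_eq_zero hB hν hblack v
  rw [hW, Finset.sum_singleton] at hsum
  have hpos := toReal_mul_pos_of_mem_wset hQ hB hv (hW ▸ Finset.mem_singleton_self u)
  have hu : ν u = 0 := (mul_eq_zero.1 hsum).resolve_right (right_ne_zero_of_mul hpos.ne')
  exact ⟨by simpa [hu] using hblack, hmarks⟩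

/-- Marks `Q(u,v)` (resp. `-Q(u,v)`) make every term of the column equation have the sign of
`σ` (resp. `-σ`). -/
lemma GameInvariant.force2 (h : GameInvariant ν c) (hv : IsPivot Q c v)
    (hall : (∀ u ∈ Wset Q c v, c.mark u = some (Q u v)) ∨
      (∀ u ∈ Wset Q c v, c.mark u = some (Q u v).inv)) :
    GameInvariant ν ⟨c.black ∪ Wset Q c v, c.mark⟩ := by
  obtain ⟨hblack, σ, hσ, hmarks⟩ := h
  have hsq : ∀ u ∈ Wset Q c v, (Q u v).toReal * (Q u v).toReal = 1 := fun u hu =>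
    toReal_mul_self_of_pos (toReal_mul_pos_of_mem_wset hQ hB hv hu)
  have hW : ∀ u ∈ Wset Q c v, ν u = 0 := by
    rcases hall with hall | hall
    · refine eq_zero_of_mem_wset_of_nonneg hQ hB hν hblack hv hσ fun u hu => ?_
      simpa [hsq u hu] using
        hmarks.nonneg_mul_of_pos (hall u hu) (toReal_mul_pos_of_mem_wset hQ hB hv hu)
    · refine eq_zero_of_mem_wset_of_nonneg hQ hB hν hblack hv (neg_ne_zero.2 hσ) fun u hu => ?_
      simpa [hsq u hu] using
        hmarks.nonneg_mul_of_pos (hall u hu) (toReal_mul_pos_of_mem_wset hQ hB hv hu)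
  refine ⟨fun u hu => ?_, σ, hσ, hmarks⟩
  rcases Finset.mem_union.1 hu with hu | hu
  · exact hblack u hu
  · exact hW u hu

/-- The marked terms of the column equation all have the sign of `σ s`, so the remaining
term `ν w * B w v` has the opposite sign, which is what the new mark `-s Q(w,v)` records. -/
lemma GameInvariant.force3 (h : GameInvariant ν c) (hv : IsPivot Q c v) {w : Fin n}
    {s : SignPatEntry} (hw : w ∈ Wset Q c v)
    (hmarked : ∀ u ∈ Wset Q c v, u ≠ w → c.mark u = some (s.mul (Q u v))) :
    GameInvariant ν ⟨c.black, Function.update c.mark w (some (s.inv.mul (Q w v)))⟩ := by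
  obtain ⟨hblack, σ, hσ, hmarks⟩ := h
  have hpos : ∀ u ∈ Wset Q c v, 0 < (Q u v).toReal * B u v := fun u hu =>
    toReal_mul_pos_of_mem_wset hQ hB hv hu
  have hrest : 0 ≤ ∑ u ∈ (Wset Q c v).erase w, σ * s.toReal * (ν u * B u v) := by
    refine Finset.sum_nonneg fun u hu => ?_
    have huW := Finset.mem_of_mem_erase hu
    have := hmarks.nonneg_mul_of_pos (hmarked u huW (Finset.ne_of_mem_erase hu)) (hpos u huW)
    rwa [toReal_mul, mul_assoc s.toReal, toReal_mul_self_of_pos (hpos u huW), mul_one] at this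
  have hsum := sum_wset_eq_zero hB hν hblack v
  rw [← Finset.add_sum_erase _ _ hw] at hsum
  rw [← Finset.mul_sum] at hrest
  have hwterm : σ * s.toReal * (ν w * B w v) ≤ 0 := by
    rw [eq_neg_of_add_eq_zero_left hsum, mul_neg]
    exact neg_nonpos.2 hrest
  have hnew : σ * s.toReal * ν w * (Q w v).toReal ≤ 0 := by
    refine nonpos_of_mul_nonpos_left ?_ (hpos w hw)
    calc σ * s.toReal * ν w * (Q w v).toReal * ((Q w v).toReal * B w v)
        = σ * s.toReal * (ν w * B w v) * ((Q w v).toReal * (Q w v).toReal) := by ring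
      _ ≤ 0 := by rw [toReal_mul_self_of_pos (hpos w hw), mul_one]; exact hwterm
  refine ⟨hblack, σ, hσ, fun u t hu => ?_⟩
  dsimp only at hu
  by_cases huw : u = w
  · subst huw
    simp only [Function.update_self, Option.some.injEq] at hu
    subst hu
    simp only [toReal_mul, toReal_inv]
    linarith
  · rw [Function.update_of_ne huw] at hu
    exact hmarks u t hu

lemma GameInvariant.step (h : GameInvariant ν c) {c' : Config n} (hstep : Step Q c c') :
    GameInvariant ν c' := by
  cases hstep with
  | force1 v u hv hW => exact h.force1 hQ hB hν hv hW
  | force2 v hv hall => exact h.force2 hQ hB hν hv hall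
  | force3 v w s hv _ hw _ hmarked _ => exact h.force3 hQ hB hν hv hw hmarked
  | force4 u hnomark _ => exact h.force4 hnomark

lemma gameInvariant_of_reflTransGen {Z : Finset (Fin n)} (hνZ : ∀ z ∈ Z, ν z = 0)
    (hplay : Relation.ReflTransGen (Step Q) (initConfig Z) c) : GameInvariant ν c := by
  induction hplay with
  | refl => exact gameInvariant_initConfig hνZ
  | tail _ hstep ih => exact ih.step hQ hB hν hstep

lemma eq_zero_of_signedZFS {Z : Finset (Fin n)} (hZ : SignedZFS Q Z)
    (hνZ : ∀ z ∈ Z, ν z = 0) : ν = 0 := by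
  obtain ⟨c, hplay, hall⟩ := hZ
  funext u
  exact (gameInvariant_of_reflTransGen hQ hB hν hνZ hplay).1 u (hall ▸ Finset.mem_univ u)

end Game

/-- If `Z` is a negative signed zero forcing set of `P_s` (a signed zero
forcing set of the positive looped pattern `P_s⁺`), then for every `A ∈ Q_s(P_s)` and every
real `λ < 0` the left eigenspace `{ν | νᵀ A = λ νᵀ}` has dimension at most `|Z|`; hence the
maximum geometric multiplicity of a negative eigenvalue over `Q_s(P_s)` is at most the
negative signed zero forcing number. -/
theorem stmt8 {n : ℕ} (P : Fin n → Fin n → SignPatEntry)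
    (hP : ∀ i j : Fin n, i ≠ j → P i j ≠ SignPatEntry.unk)
    (Z : Finset (Fin n)) (hZ : SignedZFS (posLooped P) Z) :
    ∀ A : Matrix (Fin n) (Fin n) ℝ, QClass P A →
      ∀ lam : ℝ, lam < 0 →
        Module.finrank ℝ (leftEigenspace A lam) ≤ Z.card := by
  intro A hA lam hlam
  refine finrank_le_card_of_eq_zero_of_forall_mem_eq_zero _ Z fun ν hν hνZ => ?_
  exact eq_zero_of_signedZFS (posLooped_ne_unk hP) (hA.posLooped_sub_smul_one hlam)
    (vecMul_sub_smul_one_eq_zero hν) hZ hνZ
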